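/- Let C be a commutative unital ring, R a nonzero C-algebra, and G a semigroup with zero. Then the following are equivalent: (1) the only central map δ : G → R with δ(0) = 0 is the zero map; (2) every f ∈ G satisfies f ~ 0; (3) \overline{CG} = [\overline{CG}, \overline{CG}]; (4) the only trace t : \overline{CG} → R is the zero map; (5) the only C-linear trace t : \overline{CG} → R is the zero map. -/

import Mathlib

/-- The one-step relation: `x = a*b` and `y = b*a`. -/
def simStep {G : Type*} [Mul G] (x y : G) : Prop := ∃ a b : G, x = a * b ∧ y = b * a

/-- The relation `~` on a semigroup: the reflexive-transitive closure of `simStep`. -/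
def sim {G : Type*} [Mul G] : G → G → Prop := Relation.ReflTransGen simStep

theorem sim_equiv {G : Type*} [Mul G] : Equivalence (sim (G := G)) :=
  ⟨fun _ => Relation.ReflTransGen.refl,
   fun h => by
      have : Std.Symm (simStep (G := G)) := ⟨fun _ _ ⟨a, b, h1, h2⟩ => ⟨b, a, h2, h1⟩⟩
      exact Std.Symm.symm (r := Relation.ReflTransGen simStep) _ _ h,
   fun h1 h2 => Relation.ReflTransGen.trans h1 h2⟩

/-- The setoid on `G` given by `~`. -/
def simSetoid (G : Type*) [Mul G] : Setoid G := ⟨sim, sim_equiv⟩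

/-- The additive subgroup `[A,A]` generated by commutators. -/
def commutatorSubgroup (A : Type*) [NonUnitalNonAssocRing A] : AddSubgroup A :=
  AddSubgroup.closure {x | ∃ a b : A, x = a * b - b * a}

/-- The ideal `I₀` of the semigroup ring `CG` consisting of functions supported in `{0}`. -/
noncomputable def I0 (C G : Type*) [CommRing C] [SemigroupWithZero G] :
    TwoSidedIdeal (MonoidAlgebra C G) :=
  TwoSidedIdeal.mk' {f : MonoidAlgebra C G | ∀ g : G, g ≠ 0 → f.coeff g = 0}
    (fun _ _ => rfl)
    (fun {x y} hx hy g hg => by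
      show (x + y).coeff g = 0
      rw [MonoidAlgebra.coeff_add, Finsupp.add_apply, hx g hg, hy g hg, add_zero])
    (fun {x} hx g hg => by
      show (-x).coeff g = 0
      rw [MonoidAlgebra.coeff_neg, Finsupp.neg_apply, hx g hg, neg_zero])
    (fun {x y} hy g hg => by
      classical
      rw [MonoidAlgebra.coeff_mul]
      rw [Finsupp.sum]
      refine Finset.sum_eq_zero fun a _ => ?_
      rw [Finsupp.sum]
      refine Finset.sum_eq_zero fun b hb => ?_
      have hb0 : b = 0 := by
        by_contra h
        exact Finsupp.mem_support_iff.mp hb (hy b h)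
      subst hb0
      rw [mul_zero, if_neg fun h => hg h.symm])
    (fun {x y} hx g hg => by
      classical
      rw [MonoidAlgebra.coeff_mul]
      rw [Finsupp.sum]
      refine Finset.sum_eq_zero fun a ha => ?_
      rw [Finsupp.sum]
      refine Finset.sum_eq_zero fun b _ => ?_
      have ha0 : a = 0 := by
        by_contra h
        exact Finsupp.mem_support_iff.mp ha (hx a h)
      subst ha0
      rw [zero_mul, if_neg fun h => hg h.symm])

/-- The contracted semigroup ring `\overline{CG} = CG / I₀`. -/
abbrev ContractedSemigroupRing (C G : Type*) [CommRing C] [SemigroupWithZero G] :=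
  (I0 C G).ringCon.Quotient

/-- The quotient map `π : CG → \overline{CG}`. -/
noncomputable def toCSR (C G : Type*) [CommRing C] [SemigroupWithZero G]
    (f : MonoidAlgebra C G) : ContractedSemigroupRing C G := f

/-- The map `f ↦ ∑_g f(g) • δ(g)` from `CG` to `R`. -/
def elemSum (C : Type*) {G R : Type*} [CommRing C] [SemigroupWithZero G]
    [AddCommMonoid R] [Module C R] (δ : G → R) (f : MonoidAlgebra C G) : R :=
  f.coeff.sum fun g c => c • δ g

/-!
A central map `δ : G → R` is constant on `~`-classes, and the indicator of any `~`-class is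
central; so (1) says exactly that every class is the class of `0`. If `g ~ 0`, the chain
`g = a₁b₁, b₁a₁ = a₂b₂, …, bₙaₙ = 0` exhibits `c • g - c • 0` as a sum of commutators in `CG`, and
`c • 0` vanishes in `\overline{CG}`, which gives (3). Traces kill commutators, giving (4) and (5).
Finally a central `δ` with `δ 0 = 0` extends `C`-linearly to `f ↦ ∑ f(g) • δ(g)`, a trace on `CG`
that vanishes on `I₀`, hence a `C`-linear trace on `\overline{CG}`; (5) forces it to be zero.
-/

open MonoidAlgebra

section Sim

variable {G : Type*} [Mul G]

theorem sim_mul_comm (a b : G) : sim (a * b) (b * a) :=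
  Relation.ReflTransGen.single ⟨a, b, rfl, rfl⟩

theorem sim_mul_comm_iff (a b x : G) : sim (a * b) x ↔ sim (b * a) x :=
  ⟨sim_equiv.trans (sim_mul_comm b a), sim_equiv.trans (sim_mul_comm a b)⟩

theorem sim_zero_of_forall_central_eq_zero [Zero G] {R : Type*} [Zero R] [Nontrivial R]
    (h : ∀ δ : G → R, (∀ g h : G, δ (g * h) = δ (h * g)) → δ 0 = 0 → ∀ g : G, δ g = 0)
    (f : G) : sim f 0 := by
  classical
  by_contra hf
  obtain ⟨r, hr⟩ := exists_ne (0 : R)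
  have hδ := h (fun g => if sim g f then r else 0)
    (fun a b => if_congr (sim_mul_comm_iff a b f) rfl rfl)
    (if_neg fun h0 => hf (sim_equiv.symm h0)) f
  exact hr (by simpa [sim_equiv.refl f] using hδ)

end Sim

theorem commutatorSubgroup_le_ker {A M : Type*} [NonUnitalNonAssocRing A] [AddCommGroup M]
    (t : A →+ M) (ht : ∀ x y, t (x * y) = t (y * x)) : commutatorSubgroup A ≤ t.ker :=
  AddSubgroup.closure_le _ |>.mpr fun _ ⟨x, y, hxy⟩ => by
    rw [SetLike.mem_coe, AddMonoidHom.mem_ker, hxy, map_sub, ht, sub_self]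

section ContractedSemigroupRing

variable {C G : Type*} [CommRing C] [SemigroupWithZero G]

theorem mem_I0_iff (f : MonoidAlgebra C G) : f ∈ I0 C G ↔ ∀ g : G, g ≠ 0 → f.coeff g = 0 :=
  TwoSidedIdeal.mem_mk' _ _ _ _ _ _ f

theorem toCSR_eq_toCSR_iff {f f' : MonoidAlgebra C G} :
    toCSR C G f = toCSR C G f' ↔ f - f' ∈ I0 C G :=
  RingCon.eq _ |>.trans (TwoSidedIdeal.rel_iff _ _ _)

theorem toCSR_add (f f' : MonoidAlgebra C G) :
    toCSR C G (f + f') = toCSR C G f + toCSR C G f' := rfl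

theorem toCSR_mul (f f' : MonoidAlgebra C G) :
    toCSR C G (f * f') = toCSR C G f * toCSR C G f' := rfl

theorem toCSR_single_zero (c : C) : toCSR C G (single (0 : G) c) = 0 :=
  toCSR_eq_toCSR_iff (f' := 0) |>.mpr <| (mem_I0_iff _).mpr fun _ hg => by
    rw [sub_zero, coeff_single, Finsupp.single_eq_of_ne' hg.symm]

theorem toCSR_single_sub_mem_of_simStep {g h : G} (hgh : simStep g h) (c : C) :
    toCSR C G (single g c) - toCSR C G (single h c) ∈
      commutatorSubgroup (ContractedSemigroupRing C G) := by
  obtain ⟨a, b, rfl, rfl⟩ := hgh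
  refine AddSubgroup.subset_closure ⟨toCSR C G (single a c), toCSR C G (single b 1), ?_⟩
  rw [← toCSR_mul, ← toCSR_mul, single_mul_single, single_mul_single, mul_one, one_mul]

theorem toCSR_single_sub_mem_of_sim {g h : G} (hgh : sim g h) (c : C) :
    toCSR C G (single g c) - toCSR C G (single h c) ∈
      commutatorSubgroup (ContractedSemigroupRing C G) := by
  induction hgh with
  | refl => rw [sub_self]; exact zero_mem _
  | tail _ hstep ih =>
    rw [← sub_add_sub_cancel]
    exact add_mem ih (toCSR_single_sub_mem_of_simStep hstep c)

theorem mem_commutatorSubgroup_of_forall_sim_zero (h : ∀ g : G, sim g 0)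
    (x : ContractedSemigroupRing C G) : x ∈ commutatorSubgroup (ContractedSemigroupRing C G) := by
  induction x using Quotient.inductionOn' with | h f => ?_
  change toCSR C G f ∈ _
  induction f using induction_linear with
  | zero => exact zero_mem _
  | add f f' hf hf' => rw [toCSR_add]; exact add_mem hf hf'
  | single g c => simpa [toCSR_single_zero] using toCSR_single_sub_mem_of_sim (h g) c

variable {R : Type*} [AddCommGroup R] [Module C R]

theorem elemSum_eq_linearCombination (δ : G → R) (f : MonoidAlgebra C G) :
    elemSum C δ f = Finsupp.linearCombination C δ f.coeff :=
  (Finsupp.linearCombination_apply C f.coeff).symm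

theorem elemSum_add (δ : G → R) (f f' : MonoidAlgebra C G) :
    elemSum C δ (f + f') = elemSum C δ f + elemSum C δ f' := by
  simp only [elemSum_eq_linearCombination, coeff_add, map_add]

theorem elemSum_sub (δ : G → R) (f f' : MonoidAlgebra C G) :
    elemSum C δ (f - f') = elemSum C δ f - elemSum C δ f' := by
  simp only [elemSum_eq_linearCombination, coeff_sub, map_sub]

theorem elemSum_smul (δ : G → R) (c : C) (f : MonoidAlgebra C G) :
    elemSum C δ (c • f) = c • elemSum C δ f := by
  simp only [elemSum_eq_linearCombination, coeff_smul, map_smul]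

theorem elemSum_single (δ : G → R) (g : G) (c : C) : elemSum C δ (single g c) = c • δ g := by
  simp only [elemSum_eq_linearCombination, coeff_single, Finsupp.linearCombination_single]

theorem elemSum_mul_comm (δ : G → R) (hδ : ∀ g h : G, δ (g * h) = δ (h * g))
    (f f' : MonoidAlgebra C G) : elemSum C δ (f * f') = elemSum C δ (f' * f) := by
  induction f using induction_linear with
  | zero => simp only [zero_mul, mul_zero]
  | add f₁ f₂ h₁ h₂ => rw [add_mul, mul_add, elemSum_add, elemSum_add, h₁, h₂]
  | single g c =>
    induction f' using induction_linear with
    | zero => simp only [zero_mul, mul_zero]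
    | add f₁ f₂ h₁ h₂ => rw [add_mul, mul_add, elemSum_add, elemSum_add, h₁, h₂]
    | single h d => rw [single_mul_single, single_mul_single, elemSum_single, elemSum_single,
        mul_comm, hδ]

theorem elemSum_eq_zero_of_mem_I0 {δ : G → R} (h0 : δ 0 = 0) {f : MonoidAlgebra C G}
    (hf : f ∈ I0 C G) : elemSum C δ f = 0 := by
  refine Finset.sum_eq_zero fun g _ => ?_
  dsimp only
  by_cases hg : g = 0
  · rw [hg, h0, smul_zero]
  · rw [(mem_I0_iff f).mp hf g hg, zero_smul]

noncomputable def traceOfCentral (δ : G → R) (h0 : δ 0 = 0) : ContractedSemigroupRing C G → R :=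
  fun x => Quotient.liftOn' x (elemSum C δ) fun f f' hff' => by
    rw [← sub_eq_zero, ← elemSum_sub]
    exact elemSum_eq_zero_of_mem_I0 h0 ((TwoSidedIdeal.rel_iff _ _ _).mp hff')

theorem traceOfCentral_toCSR (δ : G → R) (h0 : δ 0 = 0) (f : MonoidAlgebra C G) :
    traceOfCentral δ h0 (toCSR C G f) = elemSum C δ f := rfl

theorem traceOfCentral_add (δ : G → R) (h0 : δ 0 = 0) (x y : ContractedSemigroupRing C G) :
    traceOfCentral δ h0 (x + y) = traceOfCentral δ h0 x + traceOfCentral δ h0 y :=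
  Quotient.inductionOn₂' x y fun f f' => elemSum_add δ f f'

theorem traceOfCentral_mul_comm (δ : G → R) (hδ : ∀ g h : G, δ (g * h) = δ (h * g))
    (h0 : δ 0 = 0) (x y : ContractedSemigroupRing C G) :
    traceOfCentral δ h0 (x * y) = traceOfCentral δ h0 (y * x) :=
  Quotient.inductionOn₂' x y fun f f' => elemSum_mul_comm δ hδ f f'

theorem traceOfCentral_toCSR_smul (δ : G → R) (h0 : δ 0 = 0) (c : C) (f : MonoidAlgebra C G) :
    traceOfCentral δ h0 (toCSR C G (c • f)) = c • traceOfCentral δ h0 (toCSR C G f) :=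
  elemSum_smul δ c f

end ContractedSemigroupRing

theorem semigroupRing_commutator_tfae_general
    {C G R : Type*} [CommRing C] [SemigroupWithZero G]
    [NonUnitalRing R] [Module C R]
    [Nontrivial R] :
    List.TFAE
      [∀ δ : G → R, (∀ g h : G, δ (g * h) = δ (h * g)) → δ 0 = 0 → ∀ g : G, δ g = 0,
       ∀ f : G, sim f 0,
       ∀ x : ContractedSemigroupRing C G,
         x ∈ commutatorSubgroup (ContractedSemigroupRing C G),
       ∀ t : ContractedSemigroupRing C G → R,
         (∀ x y, t (x + y) = t x + t y) → (∀ x y, t (x * y) = t (y * x)) →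
         ∀ x, t x = 0,
       ∀ t : ContractedSemigroupRing C G → R,
         (∀ x y, t (x + y) = t x + t y) → (∀ x y, t (x * y) = t (y * x)) →
         (∀ (c : C) (f : MonoidAlgebra C G),
           t (toCSR C G (c • f)) = c • t (toCSR C G f)) →
         ∀ x, t x = 0] := by
  tfae_have 1 → 2 := sim_zero_of_forall_central_eq_zero
  tfae_have 2 → 3 := mem_commutatorSubgroup_of_forall_sim_zero
  tfae_have 3 → 4 := fun h3 t hadd hcomm x =>
    commutatorSubgroup_le_ker (AddMonoidHom.mk' t hadd) hcomm (h3 x)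
  tfae_have 4 → 5 := fun h4 t hadd hcomm _ => h4 t hadd hcomm
  tfae_have 5 → 1 := fun h5 δ hδ h0 g => by
    simpa [traceOfCentral_toCSR, elemSum_single] using
      h5 (traceOfCentral δ h0) (traceOfCentral_add δ h0) (traceOfCentral_mul_comm δ hδ h0)
        (traceOfCentral_toCSR_smul δ h0) (toCSR C G (single g 1))
  tfae_finish

/-- For a commutative unital ring `C`, a nonzero `C`-algebra `R`, and a
semigroup with zero `G`, the following are equivalent:
(1) the only central zero-preserving map `G → R` is zero;
(2) every `f ∈ G` satisfies `f ~ 0`;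
(3) `\overline{CG} = [\overline{CG}, \overline{CG}]`;
(4) the only trace `\overline{CG} → R` is zero;
(5) the only `C`-linear trace `\overline{CG} → R` is zero. -/
theorem semigroupRing_commutator_tfae
    {C G R : Type*} [CommRing C] [SemigroupWithZero G]
    [NonUnitalRing R] [Module C R] [SMulCommClass C R R] [IsScalarTower C R R]
    [Nontrivial R] :
    List.TFAE
      [∀ δ : G → R, (∀ g h : G, δ (g * h) = δ (h * g)) → δ 0 = 0 → ∀ g : G, δ g = 0,
       ∀ f : G, sim f 0,
       ∀ x : ContractedSemigroupRing C G,
         x ∈ commutatorSubgroup (ContractedSemigroupRing C G),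
       ∀ t : ContractedSemigroupRing C G → R,
         (∀ x y, t (x + y) = t x + t y) → (∀ x y, t (x * y) = t (y * x)) →
         ∀ x, t x = 0,
       ∀ t : ContractedSemigroupRing C G → R,
         (∀ x y, t (x + y) = t x + t y) → (∀ x y, t (x * y) = t (y * x)) →
         (∀ (c : C) (f : MonoidAlgebra C G),
           t (toCSR C G (c • f)) = c • t (toCSR C G f)) →
         ∀ x, t x = 0] :=
  semigroupRing_commutator_tfae_general
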